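/- arXiv:2204.09009 — 3 statements merged into one kernel-verified Lean document; each statement's English description precedes it below -/
import Mathlib

section
/- For integers k ≥ 2, n ≥ 2k, and any two distinct elements a, b of {1,...,n}, the number of stable k-subsets F of {1,...,n} with {a,b} ⊆ F is at most C(n-k-2, k-2). -/
/-!
Rotate `{1,…,n}` so that `a` becomes `1`. A stable set then consists of `1`, the image `b` of the
other point, and `k - 2` points of `{3,…,n-1}`, no two consecutive and none adjacent to `b`.
Deleting `b - 1, b, b + 1` and closing the gap turns these into a `(k - 2)`-subset of a path of
`n - 5` points with no two consecutive, and a path of `l` points has at most `C(l + 1 - j, j)`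
such `j`-subsets: split on whether the last point is used and apply Pascal's rule.
-/

open Finset

attribute [local instance] Classical.propDecidable

/-- `A` is a stable subset of `{1,...,n}`: no two cyclically consecutive elements. -/
def Stable (n : ℕ) (A : Finset ℕ) : Prop :=
  (∀ i ∈ A, i + 1 ∉ A) ∧ ¬(1 ∈ A ∧ n ∈ A)

/-- The collection of stable `k`-subsets of `{1,...,n}`. -/
noncomputable def stableSets (n k : ℕ) : Finset (Finset ℕ) :=
  ((Finset.Icc 1 n).powersetCard k).filter (fun A => Stable n A)

def NoTwoConsecutive (A : Finset ℕ) : Prop := ∀ x ∈ A, x + 1 ∉ A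

noncomputable def sparseSets (s l j : ℕ) : Finset (Finset ℕ) :=
  ((Ico s (s + l)).powersetCard j).filter NoTwoConsecutive

lemma NoTwoConsecutive.mono {A B : Finset ℕ} (hB : NoTwoConsecutive B) (h : A ⊆ B) :
    NoTwoConsecutive A :=
  fun x hx hx1 => hB x (h hx) (h hx1)

lemma NoTwoConsecutive.image {A : Finset ℕ} {f : ℕ → ℕ} (hA : NoTwoConsecutive A)
    (hf : ∀ x ∈ A, ∀ y ∈ A, f y = f x + 1 → y = x + 1) : NoTwoConsecutive (A.image f) := by
  simp only [NoTwoConsecutive, mem_image]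
  rintro _ ⟨x, hx, rfl⟩ ⟨y, hy, hxy⟩
  exact hA x hx (hf x hx y hy hxy ▸ hy)

lemma mem_sparseSets {s l j : ℕ} {G : Finset ℕ} :
    G ∈ sparseSets s l j ↔ G ⊆ Ico s (s + l) ∧ #G = j ∧ NoTwoConsecutive G := by
  rw [sparseSets, mem_filter, mem_powersetCard, and_assoc]

lemma filter_not_mem_sparseSets_subset (s l j : ℕ) :
    (sparseSets s (l + 1) j).filter (s + l ∉ ·) ⊆ sparseSets s l j := by
  intro G hG
  rw [mem_filter, mem_sparseSets] at hG
  obtain ⟨⟨hGs, hGc, hGn⟩, htop⟩ := hG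
  refine mem_sparseSets.2 ⟨fun x hx => ?_, hGc, hGn⟩
  have := mem_Ico.1 (hGs hx)
  have : x ≠ s + l := fun h => htop (h ▸ hx)
  rw [mem_Ico]
  omega

lemma card_filter_mem_sparseSets_le (s l j : ℕ) :
    #((sparseSets s (l + 2) (j + 1)).filter (s + l + 1 ∈ ·)) ≤ #(sparseSets s l j) := by
  refine card_le_card_of_injOn (fun G => G.erase (s + l + 1)) (fun G hG => ?_)
    (fun G₁ hG₁ G₂ hG₂ h => ?_)
  · rw [mem_coe, mem_filter, mem_sparseSets] at hG
    obtain ⟨⟨hGs, hGc, hGn⟩, htop⟩ := hG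
    refine mem_sparseSets.2 ⟨fun x hx => ?_, by rw [card_erase_of_mem htop, hGc]; rfl,
      hGn.mono (erase_subset _ _)⟩
    obtain ⟨hx, hxG⟩ := mem_erase.1 hx
    have := mem_Ico.1 (hGs hxG)
    have : x ≠ s + l := fun h => hGn x hxG (by rwa [h])
    rw [mem_Ico]
    omega
  · rw [mem_coe, mem_filter] at hG₁ hG₂
    rw [← insert_erase hG₁.2, ← insert_erase hG₂.2]
    exact congrArg _ h

lemma card_sparseSets_le_add (s l j : ℕ) :
    #(sparseSets s (l + 2) (j + 1)) ≤ #(sparseSets s (l + 1) (j + 1)) + #(sparseSets s l j) := by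
  rw [← card_filter_add_card_filter_not (s := sparseSets s (l + 2) (j + 1)) (s + l + 1 ∈ ·),
    add_comm]
  exact add_le_add (card_le_card (filter_not_mem_sparseSets_subset s (l + 1) (j + 1)))
    (card_filter_mem_sparseSets_le s l j)

theorem card_sparseSets_le (s : ℕ) : ∀ l j : ℕ, #(sparseSets s l j) ≤ (l + 1 - j).choose j
  | _, 0 => (card_filter_le _ _).trans (by simp)
  | 0, j + 1 => by simp [sparseSets]
  | 1, j + 1 =>
    (card_filter_le _ _).trans (by rcases j with _ | j <;> simp [Nat.choose_eq_zero_of_lt])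
  | l + 2, j + 1 => by
    rcases lt_or_ge (l + 1) j with hlj | hjl
    · have : (Ico s (s + (l + 2))).powersetCard (j + 1) = ∅ :=
        powersetCard_eq_empty.2 (by rw [Nat.card_Ico]; omega)
      simp [sparseSets, this]
    calc #(sparseSets s (l + 2) (j + 1))
        ≤ #(sparseSets s (l + 1) (j + 1)) + #(sparseSets s l j) := card_sparseSets_le_add s l j
      _ ≤ (l + 1 + 1 - (j + 1)).choose (j + 1) + (l + 1 - j).choose j :=
        add_le_add (card_sparseSets_le s (l + 1) (j + 1)) (card_sparseSets_le s l j)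
      _ = (l + 2 + 1 - (j + 1)).choose (j + 1) := by
        rw [show l + 1 + 1 - (j + 1) = l + 1 - j by omega,
          show l + 2 + 1 - (j + 1) = l + 1 - j + 1 by omega, Nat.choose_succ_succ', add_comm]

def IsCyclicSucc (n x y : ℕ) : Prop := y = x + 1 ∨ (x = n ∧ y = 1)

lemma stable_iff_forall_not_isCyclicSucc {n : ℕ} {A : Finset ℕ} :
    Stable n A ↔ ∀ x ∈ A, ∀ y ∈ A, ¬IsCyclicSucc n x y := by
  constructor
  · rintro ⟨hsucc, hwrap⟩ x hx y hy (rfl | ⟨rfl, rfl⟩)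
    exacts [hsucc x hx hy, hwrap ⟨hy, hx⟩]
  · exact fun h => ⟨fun x hx hx1 => h x hx _ hx1 (Or.inl rfl),
      fun ⟨h1, hn⟩ => h n hn 1 h1 (Or.inr ⟨rfl, rfl⟩)⟩

lemma mem_stableSets {n k : ℕ} {F : Finset ℕ} :
    F ∈ stableSets n k ↔ F ⊆ Icc 1 n ∧ #F = k ∧ Stable n F := by
  rw [stableSets, mem_filter, mem_powersetCard, and_assoc]

def rotate (a n x : ℕ) : ℕ := if x < a then x + n + 1 - a else x + 1 - a

lemma rotate_self (a n : ℕ) : rotate a n a = 1 := by simp [rotate]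

section Rotate

variable {a n : ℕ}

lemma rotate_mem_Icc (ha : a ∈ Icc 1 n) {x : ℕ} (hx : x ∈ Icc 1 n) : rotate a n x ∈ Icc 1 n := by
  rw [mem_Icc] at *
  unfold rotate
  split_ifs <;> omega

lemma rotate_injOn (ha : a ∈ Icc 1 n) : Set.InjOn (rotate a n) (Icc 1 n) := by
  intro x hx y hy h
  rw [mem_coe, mem_Icc] at *
  unfold rotate at h
  split_ifs at h <;> omega

lemma IsCyclicSucc.of_rotate (ha : a ∈ Icc 1 n) {x y : ℕ} (hx : x ∈ Icc 1 n) (hy : y ∈ Icc 1 n)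
    (h : IsCyclicSucc n (rotate a n x) (rotate a n y)) : IsCyclicSucc n x y := by
  rw [mem_Icc] at *
  unfold IsCyclicSucc rotate at *
  split_ifs at h <;> omega

lemma Stable.image_rotate (ha : a ∈ Icc 1 n) {F : Finset ℕ} (hF : F ⊆ Icc 1 n) (hs : Stable n F) :
    Stable n (F.image (rotate a n)) := by
  rw [stable_iff_forall_not_isCyclicSucc] at hs ⊢
  simp only [mem_image, forall_exists_index, and_imp]
  rintro _ x hx rfl _ y hy rfl h
  exact hs x hx y hy (h.of_rotate ha (hF hx) (hF hy))

lemma card_stable_pair_le_rotate (ha : a ∈ Icc 1 n) (k b : ℕ) :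
    #((stableSets n k).filter (fun F => a ∈ F ∧ b ∈ F))
      ≤ #((stableSets n k).filter (fun F => 1 ∈ F ∧ rotate a n b ∈ F)) := by
  refine card_le_card_of_injOn (image (rotate a n)) (fun F hF => ?_) (fun F₁ hF₁ F₂ hF₂ h => ?_)
  · rw [mem_coe, mem_filter, mem_stableSets] at hF
    obtain ⟨⟨hFn, hFk, hs⟩, haF, hbF⟩ := hF
    rw [mem_coe, mem_filter, mem_stableSets]
    exact ⟨⟨image_subset_iff.2 fun x hx => rotate_mem_Icc ha (hFn hx),
      by rw [card_image_of_injOn ((rotate_injOn ha).mono hFn), hFk], hs.image_rotate ha hFn⟩,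
      rotate_self a n ▸ mem_image_of_mem _ haF, mem_image_of_mem _ hbF⟩
  · rw [mem_coe, mem_filter, mem_stableSets] at hF₁ hF₂
    rw [← coe_inj, ← (rotate_injOn ha).image_eq_image_iff (coe_subset.2 hF₁.1.1)
      (coe_subset.2 hF₂.1.1), ← coe_image, ← coe_image, h]

end Rotate

lemma Stable.mem_Ico_of_one_mem {n : ℕ} {F : Finset ℕ} (hs : Stable n F) (hF : F ⊆ Icc 1 n)
    (h1 : 1 ∈ F) {x : ℕ} (hx : x ∈ F) (hx1 : x ≠ 1) : x ∈ Ico 3 n := by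
  have := mem_Icc.1 (hF hx)
  have : x ≠ 2 := fun h => hs.1 1 h1 (show 2 ∈ F from h ▸ hx)
  have : x ≠ n := fun h => hs.2 ⟨h1, h ▸ hx⟩
  rw [mem_Ico]
  omega

lemma Stable.add_one_lt_or_add_one_lt {n : ℕ} {F : Finset ℕ} (hs : Stable n F) {x y : ℕ}
    (hx : x ∈ F) (hy : y ∈ F) (hxy : x ≠ y) : x + 1 < y ∨ y + 1 < x := by
  have : y ≠ x + 1 := fun h => hs.1 x hx (h ▸ hy)
  have : x ≠ y + 1 := fun h => hs.1 y hy (h ▸ hx)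
  omega

def squeeze (b x : ℕ) : ℕ := if x < b then x else x - 2

lemma squeeze_injOn (b : ℕ) : Set.InjOn (squeeze b) {x | x + 1 < b ∨ b + 1 < x} := by
  intro x hx y hy h
  rw [Set.mem_ofPred_eq] at hx hy
  unfold squeeze at h
  split_ifs at h <;> omega

lemma squeeze_eq_add_one {b x y : ℕ} (hx : x + 1 < b ∨ b + 1 < x) (hy : y + 1 < b ∨ b + 1 < y)
    (h : squeeze b y = squeeze b x + 1) : y = x + 1 := by
  unfold squeeze at h
  split_ifs at h <;> omega

lemma Stable.mem_erase_one_erase {n : ℕ} {F : Finset ℕ} (hs : Stable n F) (hF : F ⊆ Icc 1 n)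
    (h1 : 1 ∈ F) {b : ℕ} (hb : b ∈ F) {x : ℕ} (hx : x ∈ (F.erase 1).erase b) :
    x ∈ Ico 3 n ∧ (x + 1 < b ∨ b + 1 < x) := by
  obtain ⟨hxb, hx1, hxF⟩ : x ≠ b ∧ x ≠ 1 ∧ x ∈ F := by simpa only [mem_erase] using hx
  exact ⟨hs.mem_Ico_of_one_mem hF h1 hxF hx1, hs.add_one_lt_or_add_one_lt hxF hb hxb⟩

lemma image_squeeze_mem_sparseSets {n k b : ℕ} {F : Finset ℕ} (hF : F ∈ stableSets n k)
    (h1 : 1 ∈ F) (hbF : b ∈ F) (hb : b ≠ 1) :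
    ((F.erase 1).erase b).image (squeeze b) ∈ sparseSets 3 (n - 5) (k - 2) := by
  obtain ⟨hFn, hFk, hs⟩ := mem_stableSets.1 hF
  have hbI := mem_Ico.1 (hs.mem_Ico_of_one_mem hFn h1 hbF hb)
  have hG x (hx : x ∈ (F.erase 1).erase b) := hs.mem_erase_one_erase hFn h1 hbF hx
  refine mem_sparseSets.2 ⟨fun y hy => ?_, ?_, ?_⟩
  · obtain ⟨x, hx, rfl⟩ := mem_image.1 hy
    obtain ⟨hxI, hxb⟩ := hG x hx
    rw [mem_Ico] at hxI ⊢
    unfold squeeze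
    split_ifs <;> omega
  · rw [card_image_of_injOn ((squeeze_injOn b).mono fun x hx => (hG x hx).2),
      card_erase_of_mem (mem_erase.2 ⟨hb, hbF⟩), card_erase_of_mem h1, hFk]
    rfl
  · exact ((show NoTwoConsecutive F from hs.1).mono
      ((erase_subset _ _).trans (erase_subset _ _))).image
      fun x hx y hy => squeeze_eq_add_one (hG x hx).2 (hG y hy).2

lemma card_stable_one_mem_le (n k : ℕ) {b : ℕ} (hb : b ≠ 1) :
    #((stableSets n k).filter (fun F => 1 ∈ F ∧ b ∈ F)) ≤ #(sparseSets 3 (n - 5) (k - 2)) := by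
  refine card_le_card_of_injOn (fun F => ((F.erase 1).erase b).image (squeeze b))
    (fun F hF => ?_) (fun F₁ hF₁ F₂ hF₂ h => ?_)
  · obtain ⟨hF, h1, hbF⟩ := mem_filter.1 (mem_coe.1 hF)
    exact image_squeeze_mem_sparseSets hF h1 hbF hb
  · have hG {F : Finset ℕ} (hF : F ∈ (stableSets n k).filter (fun F => 1 ∈ F ∧ b ∈ F)) :
        ↑((F.erase 1).erase b) ⊆ {x | x + 1 < b ∨ b + 1 < x} := by
      obtain ⟨hF, h1, hbF⟩ := mem_filter.1 hF
      obtain ⟨hFn, -, hs⟩ := mem_stableSets.1 hF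
      exact fun x hx => (hs.mem_erase_one_erase hFn h1 hbF hx).2
    have hGG : (F₁.erase 1).erase b = (F₂.erase 1).erase b := by
      rw [← coe_inj, ← (squeeze_injOn b).image_eq_image_iff (hG hF₁) (hG hF₂), ← coe_image,
        ← coe_image]
      exact congrArg _ h
    obtain ⟨-, h1₁, hb₁⟩ := mem_filter.1 (mem_coe.1 hF₁)
    obtain ⟨-, h1₂, hb₂⟩ := mem_filter.1 (mem_coe.1 hF₂)
    rw [← insert_erase h1₁, ← insert_erase h1₂, ← insert_erase (mem_erase.2 ⟨hb, hb₁⟩),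
      ← insert_erase (mem_erase.2 ⟨hb, hb₂⟩), hGG]

theorem stmt_4_general (n k : ℕ) (a b : ℕ)
    (ha : a ∈ Finset.Icc 1 n) (hb : b ∈ Finset.Icc 1 n) (hab : a ≠ b) :
    ((stableSets n k).filter (fun F => a ∈ F ∧ b ∈ F)).card
      ≤ Nat.choose (n - k - 2) (k - 2) := by
  have hb' : rotate a n b ≠ 1 := rotate_self a n ▸ (rotate_injOn ha).ne hb ha (Ne.symm hab)
  calc _ ≤ _ := card_stable_pair_le_rotate ha k b
    _ ≤ _ := card_stable_one_mem_le n k hb'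
    _ ≤ _ := card_sparseSets_le 3 (n - 5) (k - 2)
    _ = _ := by
      rcases lt_or_ge k 3 with hk | hk
      · rw [show k - 2 = 0 by omega, Nat.choose_zero_right, Nat.choose_zero_right]
      · congr 1
        omega

theorem stmt_4 (n k : ℕ) (hk : 2 ≤ k) (hn : 2 * k ≤ n) (a b : ℕ)
    (ha : a ∈ Finset.Icc 1 n) (hb : b ∈ Finset.Icc 1 n) (hab : a ≠ b) :
    ((stableSets n k).filter (fun F => a ∈ F ∧ b ∈ F)).card
      ≤ Nat.choose (n - k - 2) (k - 2) :=
  stmt_4_general n k a b ha hb hab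
end

section
/- For integers k ≥ 2 and n ≥ 2k, let F be a family of stable k-subsets of {1,...,n} with |F| ≥ k²·C(n-k-2, k-2), and γ ∈ (0,1] such that every element of {1,...,n} belongs to at most γ·|F| sets of F. Then the number of unordered pairs {A,B} of disjoint members of F is at least (1/4)·((1−γ)·|F| − k²·C(n-k-2,k-2))·(|F| − k²·C(n-k-2,k-2)). -/
open Finset

attribute [local instance] Classical.propDecidable

/-!
Two distinct points `x, y` lie in at most `C = (n-k-2).choose (k-2)` stable `k`-sets: reading the
cycle from `x`, the other `k - 2` points of such a set avoid `x, y` and their neighbours, and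
closing up the gap around `y` turns them into a path-stable set on a path with `n - 5` vertices.
So at most `k²C` members of `F` meet both of two disjoint members `A, A'`, i.e.
`deg A + deg A' ≥ |G| - k²C` in the disjointness graph of any subfamily `G`; and an intersecting
subfamily is a star plus at most `k²C` sets, hence has at most `γ|F| + k²C` members. As long as
`|G| > γ|F| + k²C` there is therefore an edge, and deleting its endpoint of larger degree removes
at least `(|G| - k²C) / 2` edges; summing these losses gives the bound.
-/

def PathStable (S : Finset ℕ) : Prop :=
  ∀ a ∈ S, a + 1 ∉ S

theorem card_filter_pathStable_le : ∀ ℓ s : ℕ,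
    #{S ∈ (Icc 1 ℓ).powersetCard s | PathStable S} ≤ (ℓ + 1 - s).choose s
  | _, 0 => (card_filter_le _ _).trans (by simp)
  | 0, s + 1 => by simp
  | 1, s + 1 => calc
      _ ≤ #((Icc 1 1).powersetCard (s + 1)) := card_filter_le _ _
      _ ≤ _ := by rcases s with _ | s <;> simp [Nat.choose_eq_zero_of_lt]
  | ℓ + 2, s + 1 => by
    set 𝒮 := {S ∈ (Icc 1 (ℓ + 2)).powersetCard (s + 1) | PathStable S}
    have hout : #{S ∈ 𝒮 | ℓ + 2 ∉ S} ≤ (ℓ + 1 + 1 - (s + 1)).choose (s + 1) := by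
      refine (card_le_card fun S hS => ?_).trans (card_filter_pathStable_le (ℓ + 1) (s + 1))
      simp only [𝒮, mem_filter, mem_powersetCard] at hS ⊢
      refine ⟨⟨fun a ha => ?_, hS.1.1.2⟩, hS.1.2⟩
      have := mem_Icc.1 (hS.1.1.1 ha)
      have : a ≠ ℓ + 2 := ne_of_mem_of_not_mem ha hS.2
      exact mem_Icc.2 (by omega)
    have hin : #{S ∈ 𝒮 | ℓ + 2 ∈ S} ≤ (ℓ + 1 - s).choose s := by
      refine (card_le_card_of_injOn (fun S => S.erase (ℓ + 2)) (fun S hS => ?_)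
        ((erase_injOn' _).mono fun S hS => by simp_all)).trans
        (card_filter_pathStable_le ℓ s)
      simp only [𝒮, coe_filter, mem_filter, mem_powersetCard] at hS ⊢
      obtain ⟨⟨⟨hSsub, hScard⟩, hS⟩, hmem⟩ := hS
      refine ⟨⟨fun a ha => ?_, by simp [card_erase_of_mem hmem, hScard]⟩,
        fun a ha h => hS a (mem_of_mem_erase ha) (mem_of_mem_erase h)⟩
      have := mem_Icc.1 (hSsub (mem_of_mem_erase ha))
      have : a ≠ ℓ + 2 := ne_of_mem_erase ha
      have : a ≠ ℓ + 1 := fun h => hS a (mem_of_mem_erase ha) (h ▸ hmem)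
      exact mem_Icc.2 (by omega)
    rw [← card_filter_add_card_filter_not (fun S : Finset ℕ => ℓ + 2 ∈ S)]
    by_cases hs : s ≤ ℓ + 1
    · rw [show ℓ + 1 + 1 - (s + 1) = ℓ + 1 - s by omega] at hout
      rw [show ℓ + 2 + 1 - (s + 1) = ℓ + 1 - s + 1 by omega, Nat.choose_succ_succ']
      omega
    · simp only [show ℓ + 1 + 1 - (s + 1) = 0 by omega, show ℓ + 1 - s = 0 by omega,
        Nat.choose_eq_zero_of_lt (by omega : 0 < s),
        Nat.choose_eq_zero_of_lt (by omega : 0 < s + 1)] at hin hout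
      omega

lemma Stable.not_adjacent {n b b' : ℕ} {B : Finset ℕ} (hB : Stable n B) (hb : b ∈ B)
    (hb' : b' ∈ B) : b' ≠ b + 1 ∧ ¬(b = n ∧ b' = 1) :=
  ⟨fun h => hB.1 b hb (h ▸ hb'), fun ⟨hbn, hb'1⟩ => hB.2 ⟨hb'1 ▸ hb', hbn ▸ hb⟩⟩

/-- For `x, b ∈ [1, n]` this is `(b - x) mod n`, the position of `b` on the `n`-cycle read
from `x`. -/
def cyclicShift (n x b : ℕ) : ℕ :=
  if x ≤ b then b - x else b + n - x

section cyclicShift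

variable {n x b b' : ℕ} {B : Finset ℕ}

lemma cyclicShift_injOn (hx : x ≤ n) : Set.InjOn (cyclicShift n x) (Icc 1 n) := by
  intro b hb b' hb' h
  simp only [coe_Icc, Set.mem_Icc, cyclicShift] at hb hb' h
  split_ifs at h <;> omega

lemma cyclicShift_mem_Icc (hB : Stable n B) (hBn : B ⊆ Icc 1 n) (hx : x ∈ B) (hb : b ∈ B)
    (hbx : b ≠ x) : cyclicShift n x b ∈ Icc 2 (n - 2) := by
  have := mem_Icc.1 (hBn hx)
  have := mem_Icc.1 (hBn hb)
  have := hB.not_adjacent hx hb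
  have := hB.not_adjacent hb hx
  simp only [mem_Icc, cyclicShift]
  split_ifs <;> omega

lemma cyclicShift_ne_succ (hB : Stable n B) (hBn : B ⊆ Icc 1 n) (hx : x ≤ n) (hb : b ∈ B)
    (hb' : b' ∈ B) : cyclicShift n x b' ≠ cyclicShift n x b + 1 := by
  have := mem_Icc.1 (hBn hb)
  have := mem_Icc.1 (hBn hb')
  have := hB.not_adjacent hb hb'
  unfold cyclicShift
  split_ifs <;> omega

end cyclicShift

lemma injOn_image_erase {α β : Type*} [DecidableEq α] [DecidableEq β] {f : α → β} {D : Set α}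
    (hf : Set.InjOn f D) (m : α) :
    Set.InjOn (fun T : Finset α => (T.erase m).image f) {T | m ∈ T ∧ ↑(T.erase m) ⊆ D} := by
  rintro T ⟨hT, hTD⟩ T' ⟨hT', hT'D⟩ h
  have : T.erase m = T'.erase m := by
    exact_mod_cast (hf.image_eq_image_iff hTD hT'D).1 (by exact_mod_cast h)
  rw [← insert_erase hT, ← insert_erase hT', this]

theorem card_filter_stableSets_le_pathStable {n k x y : ℕ} (hxy : x ≠ y) :
    #{B ∈ stableSets n k | x ∈ B ∧ y ∈ B} ≤
      #{T ∈ (Icc 2 (n - 2)).powersetCard (k - 1) | PathStable T ∧ cyclicShift n x y ∈ T} := by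
  have hmem : ∀ B ∈ {B ∈ stableSets n k | x ∈ B ∧ y ∈ B},
      (B ⊆ Icc 1 n ∧ #B = k ∧ Stable n B) ∧ x ∈ B ∧ y ∈ B := by
    intro B hB
    simpa only [stableSets, mem_filter, mem_powersetCard, and_assoc] using hB
  refine card_le_card_of_injOn (fun B => (B.erase x).image (cyclicShift n x)) ?_ ?_
  · intro B hB
    obtain ⟨⟨hBn, hBk, hB⟩, hx, hy⟩ := hmem B hB
    have hxn := (mem_Icc.1 (hBn hx)).2
    have hinj : Set.InjOn (cyclicShift n x) ↑(B.erase x) :=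
      (cyclicShift_injOn hxn).mono (coe_subset.2 ((erase_subset x B).trans hBn))
    simp only [coe_filter, Set.mem_ofPred_eq, mem_powersetCard, mem_image]
    refine ⟨⟨fun a ha => ?_, ?_⟩, ?_, y, mem_erase.2 ⟨hxy.symm, hy⟩, rfl⟩
    · obtain ⟨b, hb, rfl⟩ := mem_image.1 ha
      exact cyclicShift_mem_Icc hB hBn hx (mem_of_mem_erase hb) (ne_of_mem_erase hb)
    · rw [card_image_of_injOn hinj, card_erase_of_mem hx, hBk]
    · intro a ha ha'
      obtain ⟨b, hb, rfl⟩ := mem_image.1 ha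
      obtain ⟨b', hb', h⟩ := mem_image.1 ha'
      exact cyclicShift_ne_succ hB hBn hxn (mem_of_mem_erase hb) (mem_of_mem_erase hb') h
  · intro B hB B' hB' h
    obtain ⟨⟨hBn, -⟩, hx, -⟩ := hmem B hB
    obtain ⟨⟨hB'n, -⟩, hx', -⟩ := hmem B' hB'
    refine injOn_image_erase (cyclicShift_injOn (mem_Icc.1 (hBn hx)).2) x
      ⟨hx, ?_⟩ ⟨hx', ?_⟩ h
    · exact coe_subset.2 ((erase_subset x B).trans hBn)
    · exact coe_subset.2 ((erase_subset x B').trans hB'n)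

/-- Closes up the gap `{m - 1, m, m + 1}` of a path: `[2, m - 2] ↦ [1, m - 3]` and
`[m + 2, ∞) ↦ [m - 1, ∞)`. -/
def compress (m a : ℕ) : ℕ :=
  if a < m then a - 1 else a - 3

lemma compress_injOn {m : ℕ} (hm : 2 ≤ m) :
    Set.InjOn (compress m) {a | 2 ≤ a ∧ (a + 2 ≤ m ∨ m + 2 ≤ a)} := by
  intro a ha a' ha' h
  simp only [Set.mem_ofPred_eq] at ha ha'
  unfold compress at h
  split_ifs at h <;> omega

theorem card_filter_pathStable_mem_le (L m s : ℕ) :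
    #{T ∈ (Icc 2 L).powersetCard (s + 1) | PathStable T ∧ m ∈ T} ≤
      #{S ∈ (Icc 1 (L - 3)).powersetCard s | PathStable S} := by
  set D : Set ℕ := {a | 2 ≤ a ∧ (a + 2 ≤ m ∨ m + 2 ≤ a)}
  have hD : ∀ T ∈ {T ∈ (Icc 2 L).powersetCard (s + 1) | PathStable T ∧ m ∈ T},
      (T ⊆ Icc 2 L ∧ #T = s + 1 ∧ PathStable T) ∧ 2 ≤ m ∧ m ∈ T ∧ ↑(T.erase m) ⊆ D := by
    intro T hT
    simp only [mem_filter, mem_powersetCard] at hT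
    obtain ⟨⟨hTL, hTs⟩, hT, hm⟩ := hT
    refine ⟨⟨hTL, hTs, hT⟩, (mem_Icc.1 (hTL hm)).1, hm, fun a ha => ?_⟩
    obtain ⟨ham, haT⟩ := mem_erase.1 ha
    have := mem_Icc.1 (hTL haT)
    have : a + 1 ≠ m := fun h => hT a haT (h ▸ hm)
    have : m + 1 ≠ a := fun h => hT m hm (h ▸ haT)
    exact ⟨by omega, by omega⟩
  refine card_le_card_of_injOn (fun T => (T.erase m).image (compress m)) (fun T hT => ?_)
    fun T hT T' hT' => injOn_image_erase (compress_injOn (hD T hT).2.1) m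
      (hD T hT).2.2 (hD T' hT').2.2
  obtain ⟨⟨hTL, hTs, hT⟩, hm2, hm, hTD⟩ := hD T hT
  simp only [coe_filter, Set.mem_ofPred_eq, mem_powersetCard]
  refine ⟨⟨fun a ha => ?_, ?_⟩, fun a ha ha' => ?_⟩
  · obtain ⟨b, hb, rfl⟩ := mem_image.1 ha
    have hbD : 2 ≤ b ∧ _ := hTD hb
    have := mem_Icc.1 (hTL (mem_of_mem_erase hb))
    have := mem_Icc.1 (hTL hm)
    simp only [mem_Icc, compress]
    split_ifs <;> omega
  · rw [card_image_of_injOn ((compress_injOn hm2).mono hTD), card_erase_of_mem hm, hTs]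
    rfl
  · obtain ⟨b, hb, rfl⟩ := mem_image.1 ha
    obtain ⟨b', hb', h⟩ := mem_image.1 ha'
    have hbD : 2 ≤ b ∧ _ := hTD hb
    have hb'D : 2 ≤ b' ∧ _ := hTD hb'
    have : b' ≠ b + 1 := fun h => hT b (mem_of_mem_erase hb) (h ▸ mem_of_mem_erase hb')
    unfold compress at h
    split_ifs at h <;> omega

theorem card_filter_stableSets_mem_mem_le {n k x y : ℕ} (hk : 2 ≤ k) (hn : 2 * k ≤ n)
    (hxy : x ≠ y) : #{B ∈ stableSets n k | x ∈ B ∧ y ∈ B} ≤ (n - k - 2).choose (k - 2) := by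
  obtain ⟨s, rfl⟩ : ∃ s, k = s + 2 := ⟨k - 2, by omega⟩
  calc _ ≤ _ := card_filter_stableSets_le_pathStable hxy
    _ ≤ _ := card_filter_pathStable_mem_le (n - 2) _ s
    _ ≤ (n - 2 - 3 + 1 - s).choose s := card_filter_pathStable_le _ s
    _ = _ := by
      rcases Nat.eq_zero_or_pos s with rfl | hs
      · simp
      · rw [show n - 2 - 3 + 1 - s = n - (s + 2) - 2 by omega, Nat.add_sub_cancel]

section Families

variable {α : Type*} [DecidableEq α]

def disjointPairs (G : Finset (Finset α)) : Finset (Finset (Finset α)) :=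
  {e ∈ G.powersetCard 2 | ∀ A ∈ e, ∀ B ∈ e, A ≠ B → Disjoint A B}

theorem card_disjointPairs_eq_erase_add {G : Finset (Finset α)} {A : Finset α} (hA : A ∈ G)
    (hA₀ : A.Nonempty) :
    #(disjointPairs G) = #(disjointPairs (G.erase A)) + #{B ∈ G | Disjoint A B} := by
  have hout : {e ∈ disjointPairs G | A ∉ e} = disjointPairs (G.erase A) := by
    ext e
    simp only [disjointPairs, mem_filter, mem_powersetCard, subset_erase]
    tauto
  have hin : {e ∈ disjointPairs G | A ∈ e} = {B ∈ G | Disjoint A B}.image fun B => {A, B} := by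
    ext e
    simp only [disjointPairs, mem_filter, mem_powersetCard, mem_image]
    constructor
    · rintro ⟨⟨⟨heG, he2⟩, hdisj⟩, hAe⟩
      obtain ⟨B, hB⟩ := card_eq_one.1 (by rw [card_erase_of_mem hAe, he2] : #(e.erase A) = 1)
      have hBe : B ∈ e.erase A := hB ▸ mem_singleton_self B
      have he : e = {A, B} := by rw [← insert_erase hAe, hB]
      exact ⟨B, ⟨heG (mem_of_mem_erase hBe), hdisj A hAe B (mem_of_mem_erase hBe)
        (ne_of_mem_erase hBe).symm⟩, he.symm⟩
    · rintro ⟨B, ⟨hBG, hAB⟩, rfl⟩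
      have hBA : A ≠ B := hAB.ne hA₀.ne_empty
      refine ⟨⟨⟨insert_subset hA (singleton_subset_iff.2 hBG), card_pair hBA⟩, ?_⟩,
        mem_insert_self _ _⟩
      simp only [mem_insert, mem_singleton]
      rintro X (rfl | rfl) Y (rfl | rfl) hXY
      exacts [absurd rfl hXY, hAB, hAB.symm, absurd rfl hXY]
  have hinj : Set.InjOn (fun B => ({A, B} : Finset (Finset α)))
      ({B ∈ G | Disjoint A B} : Finset (Finset α)) := by
    intro B hB B' _ h
    have hAB : A ≠ B := (mem_filter.1 (mem_coe.1 hB)).2.ne hA₀.ne_empty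
    have : B ∈ ({A, B'} : Finset (Finset α)) := by
      rw [← show ({A, B} : Finset (Finset α)) = {A, B'} from h]
      exact mem_insert_of_mem (mem_singleton_self B)
    simpa [hAB.symm] using this
  rw [← card_filter_add_card_filter_not (s := disjointPairs G) (fun e => A ∈ e), hin, hout,
    card_image_of_injOn hinj, add_comm]

variable {F : Finset (Finset α)} {C : ℕ}

theorem card_filter_exists_mem_mem_le (hC : ∀ x y, x ≠ y → #{B ∈ F | x ∈ B ∧ y ∈ B} ≤ C)
    (X Y : Finset α) :
    #{B ∈ F | ∃ x ∈ X, ∃ y ∈ Y, x ≠ y ∧ x ∈ B ∧ y ∈ B} ≤ #X * #Y * C := by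
  set P := (X ×ˢ Y).filter fun p => p.1 ≠ p.2
  calc _ ≤ #(P.biUnion fun p => {B ∈ F | p.1 ∈ B ∧ p.2 ∈ B}) := by
        refine card_le_card fun B hB => ?_
        obtain ⟨hBF, x, hx, y, hy, hxy, hxB, hyB⟩ := mem_filter.1 hB
        exact mem_biUnion.2 ⟨(x, y), mem_filter.2 ⟨mem_product.2 ⟨hx, hy⟩, hxy⟩,
          mem_filter.2 ⟨hBF, hxB, hyB⟩⟩
    _ ≤ ∑ p ∈ P, #{B ∈ F | p.1 ∈ B ∧ p.2 ∈ B} := card_biUnion_le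
    _ ≤ #P * C := sum_le_card_nsmul _ _ _ fun p hp => hC p.1 p.2 (mem_filter.1 hp).2
    _ ≤ #X * #Y * C := by
        rw [← card_product]
        exact Nat.mul_le_mul_right _ (card_filter_le _ _)

theorem card_le_card_filter_disjoint_add (hC : ∀ x y, x ≠ y → #{B ∈ F | x ∈ B ∧ y ∈ B} ≤ C)
    {A A' : Finset α} (hAA' : Disjoint A A') :
    #F ≤ #{B ∈ F | Disjoint A B} + #{B ∈ F | Disjoint A' B} + #A * #A' * C := calc
  #F ≤ #({B ∈ F | Disjoint A B} ∪ {B ∈ F | Disjoint A' B} ∪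
      {B ∈ F | ∃ x ∈ A, ∃ y ∈ A', x ≠ y ∧ x ∈ B ∧ y ∈ B}) := by
        refine card_le_card fun B hB => ?_
        simp only [mem_union, mem_filter, hB, true_and]
        by_contra! h
        obtain ⟨⟨hA, hA'⟩, hmeet⟩ := h
        obtain ⟨x, hxA, hxB⟩ := not_disjoint_iff.1 hA
        obtain ⟨y, hyA', hyB⟩ := not_disjoint_iff.1 hA'
        exact hmeet x hxA y hyA' (fun h => disjoint_left.1 hAA' hxA (h ▸ hyA')) hxB hyB
  _ ≤ _ := (card_union_le _ _).trans (add_le_add (card_union_le _ _)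
      (card_filter_exists_mem_mem_le hC A A'))

theorem exists_card_le_card_filter_mem_add_of_intersecting
    (hF : (F : Set (Finset α)).Intersecting) (hFne : F.Nonempty) {k : ℕ}
    (hk : ∀ A ∈ F, #A ≤ k) (hC : ∀ x y, x ≠ y → #{B ∈ F | x ∈ B ∧ y ∈ B} ≤ C) :
    ∃ A ∈ F, ∃ x ∈ A, #F ≤ #{B ∈ F | x ∈ B} + k ^ 2 * C := by
  obtain ⟨A, hA⟩ := hFne
  by_cases hsmall : ∃ B ∈ F, #(B ∩ A) ≤ 1
  · obtain ⟨B, hB, hBA⟩ := hsmall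
    obtain ⟨j, hj⟩ := card_eq_one.1 (le_antisymm hBA
      (card_pos.2 (Finset.not_disjoint_iff_nonempty_inter.1 (hF hB hA))))
    have hjBA : j ∈ B ∩ A := hj ▸ mem_singleton_self j
    refine ⟨A, hA, j, (mem_inter.1 hjBA).2, ?_⟩
    calc #F ≤ #({B' ∈ F | j ∈ B'} ∪ {B' ∈ F | ∃ x ∈ A, ∃ y ∈ B, x ≠ y ∧ x ∈ B' ∧ y ∈ B'}) := by
          refine card_le_card fun B' hB' => ?_
          simp only [mem_union, mem_filter, hB', true_and]
          refine or_iff_not_imp_left.2 fun hjB' => ?_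
          obtain ⟨x, hxB', hxA⟩ := not_disjoint_iff.1 (hF hB' hA)
          obtain ⟨y, hyB', hyB⟩ := not_disjoint_iff.1 (hF hB' hB)
          refine ⟨x, hxA, y, hyB, fun hxy => hjB' ?_, hxB', hyB'⟩
          have : x ∈ B ∩ A := mem_inter.2 ⟨hxy ▸ hyB, hxA⟩
          rw [hj, mem_singleton] at this
          rwa [this] at hxB'
      _ ≤ #{B' ∈ F | j ∈ B'} + #A * #B * C :=
          (card_union_le _ _).trans (add_le_add_right (card_filter_exists_mem_mem_le hC A B) _)
      _ ≤ _ := by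
          rw [sq]
          gcongr <;> exact hk _ ‹_›
  · simp only [not_exists, not_and, not_le] at hsmall
    obtain ⟨x, hx⟩ := nonempty_iff_ne_empty.2 (hF.ne_bot hA)
    refine ⟨A, hA, x, hx, ?_⟩
    calc #F ≤ #{B ∈ F | ∃ x ∈ A, ∃ y ∈ A, x ≠ y ∧ x ∈ B ∧ y ∈ B} := by
          refine card_le_card fun B hB => ?_
          refine mem_filter.2 ⟨hB, ?_⟩
          obtain ⟨x, hx, y, hy, hxy⟩ := one_lt_card.1 (hsmall B hB)
          exact ⟨x, (mem_inter.1 hx).2, y, (mem_inter.1 hy).2, hxy, (mem_inter.1 hx).1,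
            (mem_inter.1 hy).1⟩
      _ ≤ #A * #A * C := card_filter_exists_mem_mem_le hC A A
      _ ≤ k ^ 2 * C := by
          rw [sq]
          gcongr <;> exact hk A hA
      _ ≤ _ := le_add_self

theorem exists_disjoint_card_le_card_filter_disjoint_add {k : ℕ} {D : ℝ}
    (hk : ∀ A ∈ F, #A ≤ k) (hC : ∀ x y, x ≠ y → #{B ∈ F | x ∈ B ∧ y ∈ B} ≤ C)
    (hdeg : ∀ A ∈ F, ∀ x ∈ A, (#{B ∈ F | x ∈ B} : ℝ) ≤ D) (hD : 0 ≤ D)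
    (hF : D + (k ^ 2 * C : ℕ) < #F) :
    ∃ A ∈ F, ∃ A' ∈ F, Disjoint A A' ∧
      #F ≤ #{B ∈ F | Disjoint A B} + #{B ∈ F | Disjoint A' B} + k ^ 2 * C := by
  obtain ⟨A, hA, A', hA', hAA'⟩ : ∃ A ∈ F, ∃ A' ∈ F, Disjoint A A' := by
    by_contra! hint
    have hFne : F.Nonempty :=
      card_pos.1 (by exact_mod_cast (add_nonneg hD (Nat.cast_nonneg _)).trans_lt hF)
    obtain ⟨B, hB, x, hx, hcard⟩ := exists_card_le_card_filter_mem_add_of_intersecting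
      (fun A hA B hB => hint A hA B hB) hFne hk hC
    have : (#F : ℝ) ≤ #{B ∈ F | x ∈ B} + (k ^ 2 * C : ℕ) := by exact_mod_cast hcard
    linarith [hdeg B hB x hx]
  refine ⟨A, hA, A', hA', hAA', (card_le_card_filter_disjoint_add hC hAA').trans ?_⟩
  rw [sq]
  gcongr <;> exact hk _ ‹_›

theorem le_card_disjointPairs (hF : ∀ A ∈ F, A.Nonempty) {D : ℝ} (hD : 0 ≤ D) {t : ℕ}
    (hsplit : ∀ G ⊆ F, D + t < #G → ∃ A ∈ G, ∃ A' ∈ G, Disjoint A A' ∧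
      #G ≤ #{B ∈ G | Disjoint A B} + #{B ∈ G | Disjoint A' B} + t)
    (G : Finset (Finset α)) (hGF : G ⊆ F) (htG : t ≤ #G) :
    1 / 4 * ((#G : ℝ) - D - t) * (#G - t) ≤ #(disjointPairs G) := by
  induction G using Finset.strongInduction with
  | H G ih =>
  have htG' : (t : ℝ) ≤ #G := by exact_mod_cast htG
  by_cases hsmall : (#G : ℝ) ≤ D + t
  · calc _ ≤ (0 : ℝ) := mul_nonpos_of_nonpos_of_nonneg (by linarith) (by linarith)
      _ ≤ _ := Nat.cast_nonneg _
  obtain ⟨A, hA, A', hA', hAA', hcover⟩ := hsplit G hGF (not_le.1 hsmall)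
  wlog hdeg : #{B ∈ G | Disjoint A' B} ≤ #{B ∈ G | Disjoint A B} generalizing A A'
  · exact this A' hA' A hA hAA'.symm (by omega) (by omega)
  have hGt : t < #G := by exact_mod_cast (show (t : ℝ) < #G by linarith)
  have hIH := ih (G.erase A) (erase_ssubset hA) ((erase_subset A G).trans hGF)
    (by rw [card_erase_of_mem hA]; omega)
  rw [card_erase_of_mem hA, Nat.cast_sub (card_pos.2 ⟨A, hA⟩), Nat.cast_one] at hIH
  have hdegA : (#G : ℝ) ≤ 2 * #{B ∈ G | Disjoint A B} + t := by exact_mod_cast (by omega)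
  rw [card_disjointPairs_eq_erase_add hA (hF A (hGF hA)), Nat.cast_add]
  -- `(g - D - t)(g - t) - (g - 1 - D - t)(g - 1 - t) = 2(g - t) - 1 - D` with `g = #G`
  linarith

end Families

theorem stmt_7_general (n k : ℕ) (hk : 2 ≤ k) (hn : 2 * k ≤ n) (F : Finset (Finset ℕ))
    (hF : F ⊆ stableSets n k)
    (hsize : (k ^ 2 * Nat.choose (n - k - 2) (k - 2) : ℝ) ≤ (F.card : ℝ))
    (γ : ℝ) (hγ0 : 0 < γ)
    (hpop : ∀ j ∈ Finset.Icc 1 n, ((F.filter (fun A => j ∈ A)).card : ℝ) ≤ γ * F.card) :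
    (1 / 4) * ((1 - γ) * F.card - k ^ 2 * Nat.choose (n - k - 2) (k - 2))
        * ((F.card : ℝ) - k ^ 2 * Nat.choose (n - k - 2) (k - 2))
      ≤ (((F.powersetCard 2).filter
            (fun e => ∀ A ∈ e, ∀ B ∈ e, A ≠ B → Disjoint A B)).card : ℝ) := by
  have hmem : ∀ A ∈ F, A ⊆ Icc 1 n ∧ #A = k := fun A hA =>
    mem_powersetCard.1 (mem_filter.1 (hF hA)).1
  have hne : ∀ A ∈ F, A.Nonempty := fun A hA => card_pos.1 (by rw [(hmem A hA).2]; omega)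
  have := le_card_disjointPairs (D := γ * #F) hne (by positivity)
    (fun G hGF => exists_disjoint_card_le_card_filter_disjoint_add
      (fun A hA => (hmem A (hGF hA)).2.le)
      (fun x y hxy => (card_le_card (filter_subset_filter _ (hGF.trans hF))).trans
        (card_filter_stableSets_mem_mem_le hk hn hxy))
      (fun A hA x hx => (Nat.cast_le.2 (card_le_card (filter_subset_filter _ hGF))).trans
        (hpop x ((hmem A (hGF hA)).1 hx)))
      (by positivity))
    F subset_rfl (by exact_mod_cast hsize)
  push_cast at this
  unfold disjointPairs at this
  linarith

theorem stmt_7 (n k : ℕ) (hk : 2 ≤ k) (hn : 2 * k ≤ n) (F : Finset (Finset ℕ))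
    (hF : F ⊆ stableSets n k)
    (hsize : (k ^ 2 * Nat.choose (n - k - 2) (k - 2) : ℝ) ≤ (F.card : ℝ))
    (γ : ℝ) (hγ0 : 0 < γ) (hγ1 : γ ≤ 1)
    (hpop : ∀ j ∈ Finset.Icc 1 n, ((F.filter (fun A => j ∈ A)).card : ℝ) ≤ γ * F.card) :
    (1 / 4) * ((1 - γ) * F.card - k ^ 2 * Nat.choose (n - k - 2) (k - 2))
        * ((F.card : ℝ) - k ^ 2 * Nat.choose (n - k - 2) (k - 2))
      ≤ (((F.powersetCard 2).filter
            (fun e => ∀ A ∈ e, ∀ B ∈ e, A ≠ B → Disjoint A B)).card : ℝ) :=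
  stmt_7_general n k hk hn F hF hsize γ hγ0 hpop
end

section
/- For integers k ≥ 2 and n ≥ 10k⁴, if F is a family of stable k-subsets of {1,...,n} with |F| ≥ (1/(2n))·N, where N is the total number of stable k-subsets of {1,...,n}, and every element of {1,...,n} belongs to at most γ·|F| sets of F for some γ ∈ (0,1], then the probability that two sets chosen uniformly and independently from F are disjoint is at least (3/8)·(3/4 − γ). -/
open Finset

attribute [local instance] Classical.propDecidable

/-!
Let `d j` be the number of members of `F` containing `j` and `Q = ∑ j, d j ^ 2`. Counting ordered
pairs gives `|F|² ≤ 2E + Q`: an intersecting pair `(A, B)` contributes `|A ∩ B| ≥ 1` to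
`∑_{(A,B)} |A ∩ B| = Q`. On the other hand `Q = ∑_{B ∈ F} ∑_{j ∈ B} d j`, so by Cauchy–Schwarz
`Q² ≤ |F| ∑_B (∑_{j ∈ B} d j)²`. Expanding the square, the diagonal terms contribute at most
`γ|F| Q`, and, since two points lie in at most `C(n, k-2)` members, the off-diagonal ones at most
`C(n, k-2) (k|F|)²`. There are at least `C(n-k, k)` stable `k`-sets, so for `n ≥ 10k⁴` the size
hypothesis gives `4k² C(n, k-2) ≤ |F|`. Hence `Q² ≤ γ|F|² Q + |F|⁴/4`, which forces
`Q ≤ (1/2 + 2γ/3)|F|²`, so that `2E ≥ |F|² - Q ≥ (1/2 - 2γ/3)|F|²`.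
-/

theorem sum_sum_eq_sum_card_filter_mul {ι β R : Type*} [DecidableEq β] [NonAssocSemiring R]
    {F : Finset ι} {T : Finset β} {g : ι → Finset β} (hg : ∀ i ∈ F, g i ⊆ T) (w : β → R) :
    ∑ i ∈ F, ∑ x ∈ g i, w x = ∑ x ∈ T, (#{i ∈ F | x ∈ g i} : R) * w x := by
  rw [sum_comm' (t' := T) (s' := fun x => {i ∈ F | x ∈ g i})]
  · simp only [sum_const, nsmul_eq_mul]
  · intro i x
    simp only [mem_filter]
    exact ⟨fun h => ⟨h, hg i h.1 h.2⟩, And.left⟩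

theorem card_filter_product_le_two_mul {β : Type*} {F : Finset β} {r : β → β → Prop}
    (hsymm : ∀ A B, r A B → r B A) (hirrefl : ∀ A ∈ F, ¬r A A) :
    #{q ∈ F ×ˢ F | r q.1 q.2} ≤ 2 * #{e ∈ F.powersetCard 2 | ∀ A ∈ e, ∀ B ∈ e, A ≠ B → r A B} := by
  refine card_le_mul_card_image_of_maps_to (f := fun q => ({q.1, q.2} : Finset β))
    (fun q hq => ?_) 2 fun e he => ?_
  · obtain ⟨⟨hA, hB⟩, hr⟩ : (q.1 ∈ F ∧ q.2 ∈ F) ∧ r q.1 q.2 := by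
      simpa only [mem_filter, mem_product] using hq
    have hne : q.1 ≠ q.2 := fun h => hirrefl _ hA (h ▸ hr)
    simp only [mem_filter, mem_powersetCard, mem_insert, mem_singleton]
    refine ⟨⟨insert_subset hA (singleton_subset_iff.mpr hB), card_pair hne⟩, ?_⟩
    rintro A (rfl | rfl) B (rfl | rfl) hAB
    exacts [absurd rfl hAB, hr, hsymm _ _ hr, absurd rfl hAB]
  · simp only [mem_filter, mem_powersetCard] at he
    obtain ⟨A, B, -, rfl⟩ := card_eq_two.mp he.1.2
    calc #{q ∈ {q ∈ F ×ˢ F | r q.1 q.2} | ({q.1, q.2} : Finset β) = {A, B}}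
        ≤ #{(A, B), (B, A)} := card_le_card fun q hq => by
          have h := (mem_filter.mp hq).2
          rw [← coe_inj, coe_pair, coe_pair, Set.pair_eq_pair_iff] at h
          rcases h with ⟨h1, h2⟩ | ⟨h1, h2⟩ <;> simp [← h1, ← h2]
      _ ≤ 2 := card_le_two

section Degree

variable {α : Type*} [DecidableEq α]

def degree (F : Finset (Finset α)) (j : α) : ℕ := #{B ∈ F | j ∈ B}

def codegree (F : Finset (Finset α)) (j j' : α) : ℕ := #{B ∈ F | j ∈ B ∧ j' ∈ B}

variable {F : Finset (Finset α)} {S : Finset α} {k : ℕ}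

theorem sum_degree_mul_eq_sum_sum {R : Type*} [NonAssocSemiring R] (hS : ∀ B ∈ F, B ⊆ S)
    (w : α → R) : ∑ j ∈ S, (degree F j : R) * w j = ∑ B ∈ F, ∑ j ∈ B, w j :=
  (sum_sum_eq_sum_card_filter_mul hS w).symm

theorem sum_degree_eq_mul_card (hF : F ⊆ S.powersetCard k) :
    ∑ j ∈ S, degree F j = k * #F := by
  have hS : ∀ B ∈ F, B ⊆ S := fun B hB => (mem_powersetCard.mp (hF hB)).1
  have h := sum_degree_mul_eq_sum_sum hS (fun _ => (1 : ℕ))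
  simp only [Nat.cast_id, mul_one, ← card_eq_sum_ones] at h
  rw [h, sum_congr rfl fun B hB => (mem_powersetCard.mp (hF hB)).2, sum_const, smul_eq_mul,
    mul_comm]

theorem codegree_le_choose (hF : F ⊆ S.powersetCard k) {j j' : α} (hne : j ≠ j') :
    codegree F j j' ≤ (#S).choose (k - 2) := by
  rw [← card_powersetCard]
  refine card_le_card_of_injOn (· \ {j, j'}) (fun B hB => ?_) fun B hB B' hB' h => ?_
  · simp only [coe_filter, Set.mem_ofPred_eq] at hB
    obtain ⟨hBS, hBk⟩ := mem_powersetCard.mp (hF hB.1)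
    have hpair : {j, j'} ⊆ B := insert_subset hB.2.1 (singleton_subset_iff.mpr hB.2.2)
    rw [mem_coe, mem_powersetCard, card_sdiff_of_subset hpair, card_pair hne, hBk]
    exact ⟨sdiff_subset.trans hBS, rfl⟩
  · simp only [coe_filter, Set.mem_ofPred_eq] at hB hB'
    have hpair : {j, j'} ⊆ B := insert_subset hB.2.1 (singleton_subset_iff.mpr hB.2.2)
    have hpair' : {j, j'} ⊆ B' := insert_subset hB'.2.1 (singleton_subset_iff.mpr hB'.2.2)
    rw [← sdiff_union_of_subset hpair, ← sdiff_union_of_subset hpair']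
    exact congrArg (· ∪ {j, j'}) h

theorem sum_sq_sum_degree_le (hS : ∀ B ∈ F, B ⊆ S) {D : ℝ} {c : ℕ}
    (hdeg : ∀ j ∈ S, (degree F j : ℝ) ≤ D)
    (hcodeg : ∀ j ∈ S, ∀ j' ∈ S, j ≠ j' → codegree F j j' ≤ c) :
    ∑ B ∈ F, (∑ j ∈ B, (degree F j : ℝ)) ^ 2 ≤
      D * ∑ j ∈ S, (degree F j : ℝ) ^ 2 + c * (∑ j ∈ S, (degree F j : ℝ)) ^ 2 := by
  set d : α → ℝ := fun j => degree F j
  have hd : ∀ j, 0 ≤ d j := fun j => Nat.cast_nonneg _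
  have hexpand : ∑ B ∈ F, (∑ j ∈ B, d j) ^ 2 =
      ∑ p ∈ S ×ˢ S, (codegree F p.1 p.2 : ℝ) * (d p.1 * d p.2) := by
    have h := sum_sum_eq_sum_card_filter_mul (g := fun B => B ×ˢ B)
      (fun B hB => product_subset_product (hS B hB) (hS B hB)) (fun p => d p.1 * d p.2)
    calc ∑ B ∈ F, (∑ j ∈ B, d j) ^ 2 = ∑ B ∈ F, ∑ p ∈ B ×ˢ B, d p.1 * d p.2 :=
          sum_congr rfl fun B _ => by rw [sq, sum_mul_sum, sum_product]
      _ = _ := by rw [h]; simp only [codegree, mem_product]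
  rw [hexpand, ← diag_union_offDiag, sum_union (disjoint_diag_offDiag S), sum_diag]
  gcongr ?_ + ?_
  · rw [mul_sum]
    refine sum_le_sum fun j hj => ?_
    have hjj : codegree F j j = degree F j := by simp only [codegree, and_self, degree]
    rw [hjj, ← sq]
    exact mul_le_mul_of_nonneg_right (hdeg j hj) (sq_nonneg _)
  · calc ∑ p ∈ S.offDiag, (codegree F p.1 p.2 : ℝ) * (d p.1 * d p.2)
        ≤ ∑ p ∈ S.offDiag, (c : ℝ) * (d p.1 * d p.2) := by
          refine sum_le_sum fun p hp => ?_
          obtain ⟨h1, h2, hne⟩ := mem_offDiag.mp hp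
          gcongr
          exact hcodeg _ h1 _ h2 hne
      _ ≤ ∑ p ∈ S ×ˢ S, (c : ℝ) * (d p.1 * d p.2) :=
          sum_le_sum_of_subset_of_nonneg
            (fun p hp => mem_product.mpr ⟨(mem_offDiag.mp hp).1, (mem_offDiag.mp hp).2.1⟩)
            fun p _ _ => mul_nonneg c.cast_nonneg (mul_nonneg (hd _) (hd _))
      _ = c * (∑ j ∈ S, d j) ^ 2 := by rw [← mul_sum, sq, sum_mul_sum, sum_product]

theorem sq_sum_degree_sq_le (hF : F ⊆ S.powersetCard k) {D : ℝ} {c : ℕ}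
    (hdeg : ∀ j ∈ S, (degree F j : ℝ) ≤ D)
    (hcodeg : ∀ j ∈ S, ∀ j' ∈ S, j ≠ j' → codegree F j j' ≤ c) :
    (∑ j ∈ S, (degree F j : ℝ) ^ 2) ^ 2 ≤
      #F * (D * ∑ j ∈ S, (degree F j : ℝ) ^ 2 + c * (k * #F) ^ 2) := by
  have hS : ∀ B ∈ F, B ⊆ S := fun B hB => (mem_powersetCard.mp (hF hB)).1
  have hsum : ∑ j ∈ S, (degree F j : ℝ) = k * #F := by
    exact_mod_cast sum_degree_eq_mul_card hF
  calc (∑ j ∈ S, (degree F j : ℝ) ^ 2) ^ 2 = (∑ B ∈ F, ∑ j ∈ B, (degree F j : ℝ)) ^ 2 := by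
        simp only [sq (degree F _ : ℝ), sum_degree_mul_eq_sum_sum hS]
    _ ≤ #F * ∑ B ∈ F, (∑ j ∈ B, (degree F j : ℝ)) ^ 2 := sq_sum_le_card_mul_sum_sq
    _ ≤ _ := by
        gcongr
        simpa only [hsum] using sum_sq_sum_degree_le hS hdeg hcodeg

theorem card_filter_not_disjoint_le_sum_degree_sq (hS : ∀ B ∈ F, B ⊆ S) :
    #{q ∈ F ×ˢ F | ¬Disjoint q.1 q.2} ≤ ∑ j ∈ S, degree F j ^ 2 := by
  calc #{q ∈ F ×ˢ F | ¬Disjoint q.1 q.2} ≤ ∑ q ∈ F ×ˢ F, #(q.1 ∩ q.2) := by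
        rw [card_eq_sum_ones, sum_filter]
        refine sum_le_sum fun q _ => ?_
        split_ifs with h
        exacts [Nat.zero_le _, card_pos.mpr (not_disjoint_iff_nonempty_inter.mp h)]
    _ = ∑ j ∈ S, #{q ∈ F ×ˢ F | j ∈ q.1 ∩ q.2} := by
        simpa only [card_eq_sum_ones, Nat.cast_id, mul_one] using
          sum_sum_eq_sum_card_filter_mul (g := fun q => q.1 ∩ q.2)
            (fun q hq => inter_subset_left.trans (hS _ (mem_product.mp hq).1)) fun _ => (1 : ℕ)
    _ = ∑ j ∈ S, degree F j ^ 2 := by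
        refine sum_congr rfl fun j _ => ?_
        rw [sq, degree, ← card_product, ← filter_product]
        simp only [mem_inter]

theorem card_sq_le_two_mul_card_disjoint_pairs_add (hS : ∀ B ∈ F, B ⊆ S)
    (hne : ∀ B ∈ F, B.Nonempty) :
    #F ^ 2 ≤ 2 * #{e ∈ F.powersetCard 2 | ∀ A ∈ e, ∀ B ∈ e, A ≠ B → Disjoint A B} +
      ∑ j ∈ S, degree F j ^ 2 := by
  have hirrefl : ∀ A ∈ F, ¬Disjoint A A := fun A hA => by
    simpa only [disjoint_self, bot_eq_empty] using (hne A hA).ne_empty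
  have hdisj : #{q ∈ F ×ˢ F | Disjoint q.1 q.2} ≤
      2 * #{e ∈ F.powersetCard 2 | ∀ A ∈ e, ∀ B ∈ e, A ≠ B → Disjoint A B} := by
    convert card_filter_product_le_two_mul (fun _ _ h => h.symm) hirrefl
  rw [sq, ← card_product, ← card_filter_add_card_filter_not (fun q => Disjoint q.1 q.2)]
  exact add_le_add hdisj (card_filter_not_disjoint_le_sum_degree_sq hS)

end Degree

/-- Moving the `i`-th smallest element of `T` up by `i` opens a gap between any two elements. -/
def spread (T : Finset ℕ) : Finset ℕ :=
  univ.image fun i : Fin #T => T.orderEmbOfFin rfl i + i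

theorem spread_eq_image {T : Finset ℕ} {k : ℕ} (h : #T = k) :
    spread T = univ.image fun i : Fin k => T.orderEmbOfFin h i + i := by
  subst h
  rfl

theorem strictMono_add_val {k : ℕ} (e : Fin k ↪o ℕ) : StrictMono fun i : Fin k => e i + i :=
  fun _ _ hij => add_lt_add (e.strictMono hij) hij

theorem card_spread (T : Finset ℕ) : #(spread T) = #T := by
  rw [spread, card_image_of_injective _ (strictMono_add_val _).injective, card_univ,
    Fintype.card_fin]

theorem spread_injective : Function.Injective spread := by
  intro T T' h
  obtain ⟨k, hk, hk'⟩ : ∃ k, #T = k ∧ #T' = k := ⟨_, rfl, by rw [← card_spread, ← h, card_spread]⟩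
  rw [spread_eq_image hk, spread_eq_image hk', ← coe_inj, coe_image, coe_image, coe_univ,
    Set.image_univ, Set.image_univ, (strictMono_add_val _).range_inj (strictMono_add_val _)] at h
  have he : T.orderEmbOfFin hk = T'.orderEmbOfFin hk' := by
    ext i
    simpa only [add_left_inj] using congrFun h i
  rw [← coe_inj, ← range_orderEmbOfFin T hk, ← range_orderEmbOfFin T' hk', he]

theorem spread_mem_stableSets {n k : ℕ} {T : Finset ℕ}
    (hT : T ∈ (Icc 1 (n - k)).powersetCard k) : spread T ∈ stableSets n k := by
  obtain ⟨hTsub, hTk⟩ := mem_powersetCard.mp hT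
  set e := T.orderEmbOfFin hTk
  have hbound : ∀ i, 1 ≤ e i ∧ e i ≤ n - k := fun i =>
    mem_Icc.mp (hTsub (T.orderEmbOfFin_mem hTk i))
  have hmem : ∀ x ∈ spread T, ∃ i : Fin k, e i + i = x := by
    simp only [spread_eq_image hTk, mem_image, mem_univ, true_and, e, imp_self, implies_true]
  refine mem_filter.mpr ⟨mem_powersetCard.mpr ⟨fun x hx => ?_, (card_spread T).trans hTk⟩,
    fun x hx hx1 => ?_, fun ⟨_, hn⟩ => ?_⟩
  · obtain ⟨i, rfl⟩ := hmem x hx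
    have := hbound i
    have := i.isLt
    rw [mem_Icc]
    omega
  · obtain ⟨i, rfl⟩ := hmem x hx
    obtain ⟨j, hj⟩ := hmem _ hx1
    rcases lt_or_ge i j with hij | hji
    · have := e.strictMono hij
      have : (i : ℕ) < j := hij
      omega
    · have := e.monotone hji
      have : (j : ℕ) ≤ i := hji
      omega
  · obtain ⟨i, hi⟩ := hmem n hn
    have := hbound i
    have := i.isLt
    omega

theorem choose_le_card_stableSets (n k : ℕ) : (n - k).choose k ≤ #(stableSets n k) := by
  have h := card_le_card_of_injOn (s := (Icc 1 (n - k)).powersetCard k) spread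
    (fun T hT => spread_mem_stableSets hT) spread_injective.injOn
  rwa [card_powersetCard, Nat.card_Icc, Nat.add_sub_cancel] at h

theorem eight_mul_choose_le_choose_sub {n k : ℕ} (hk : 2 ≤ k) (hn : 10 * k ^ 4 ≤ n) :
    (8 * n * k ^ 2 * n.choose (k - 2) : ℝ) ≤ (n - k).choose k := by
  obtain ⟨K, rfl⟩ := Nat.exists_eq_add_of_le' hk
  have hnR : 10 * (K + 2 : ℝ) ^ 4 ≤ n := by exact_mod_cast hn
  have hkn : 2 * (K + 2) ≤ n := by
    have := Nat.le_self_pow (by norm_num : 4 ≠ 0) (K + 2)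
    omega
  have hfact : ((K + 2).factorial : ℝ) = (K + 2) * (K + 1) * K.factorial := by
    push_cast [Nat.factorial_succ]
    ring
  have hcast : ((n - (K + 2) + 1 - (K + 2) : ℕ) : ℝ) = n + (1 - 2 * (K + 2)) := by
    rw [Nat.cast_sub (by omega), Nat.cast_add, Nat.cast_sub (by omega)]
    push_cast
    ring
  have hbern := pow_add_mul_le_add_pow (a := (n : ℝ)) (b := 1 - 2 * (K + 2)) (Nat.cast_nonneg n)
    (by linarith) (K + 2)
  have hlower := Nat.pow_le_choose (α := ℝ) (K + 2) (n - (K + 2))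
  rw [hcast] at hlower
  push_cast at hbern hlower ⊢
  calc (8 * n * (K + 2) ^ 2 * n.choose (K + 2 - 2) : ℝ)
      ≤ 8 * n * (K + 2) ^ 2 * (n ^ K / K.factorial) := by
        rw [Nat.add_sub_cancel]
        gcongr
        exact Nat.choose_le_pow_div K n
    _ = 8 * (K + 2) ^ 2 * ((K + 2) * (K + 1)) * n ^ (K + 1) / (K + 2).factorial := by
        rw [hfact]
        field_simp
        ring
    _ ≤ (n ^ (K + 2) + (K + 2) * n ^ (K + 1) * (1 - 2 * (K + 2))) / (K + 2).factorial := by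
        gcongr
        have hpoly : 8 * (K + 2 : ℝ) ^ 2 * ((K + 2) * (K + 1)) ≤
            n + (K + 2) * (1 - 2 * (K + 2)) := by
          nlinarith [sq_nonneg (K + 2 : ℝ), sq_nonneg (K : ℝ)]
        linear_combination mul_le_mul_of_nonneg_right hpoly (pow_nonneg n.cast_nonneg (K + 1))
    _ ≤ (n + (1 - 2 * (K + 2))) ^ (K + 2) / (K + 2).factorial := by gcongr
    _ ≤ (n - (K + 2)).choose (K + 2) := hlower

theorem four_mul_sq_mul_choose_le {n k : ℕ} (hk : 2 ≤ k) (hn : 10 * k ^ 4 ≤ n) :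
    (4 * k ^ 2 * n.choose (k - 2) : ℝ) ≤ 1 / (2 * n) * #(stableSets n k) := by
  have hn0 : (0 : ℝ) < n := by
    have := Nat.pow_le_pow_left hk 4
    exact_mod_cast (show 0 < n by omega)
  calc (4 * k ^ 2 * n.choose (k - 2) : ℝ)
        = 1 / (2 * n) * (8 * n * k ^ 2 * n.choose (k - 2)) := by
        field_simp
        ring
    _ ≤ 1 / (2 * n) * #(stableSets n k) := by
        gcongr
        exact (eight_mul_choose_le_choose_sub hk hn).trans
          (by exact_mod_cast choose_le_card_stableSets n k)

/-- The constant is the chord, over `0 ≤ γ ≤ 3/4`, of the convex function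
`γ ↦ (γ + √(γ² + 1)) / 2`, the larger root of `x² = γ x + 1/4`. -/
theorem le_mul_sq_of_sq_le_mul_add {γ Q f : ℝ} (hγ0 : 0 ≤ γ) (hγ : γ ≤ 3 / 4) (hQ : 0 ≤ Q)
    (h : Q ^ 2 ≤ γ * f ^ 2 * Q + f ^ 4 / 4) : Q ≤ (1 / 2 + 2 / 3 * γ) * f ^ 2 := by
  by_contra! hlt
  have hpos : 0 < Q + (1 / 2 + 2 / 3 * γ) * f ^ 2 - γ * f ^ 2 := by nlinarith [sq_nonneg f]
  nlinarith [mul_pos (sub_pos.mpr hlt) hpos,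
    mul_nonneg (mul_nonneg hγ0 (by linarith : (0 : ℝ) ≤ 3 - 4 * γ)) (pow_nonneg (sq_nonneg f) 2)]

theorem stmt_10_general (n k : ℕ) (hk : 2 ≤ k) (hn : 10 * k ^ 4 ≤ n) (F : Finset (Finset ℕ))
    (hF : F ⊆ stableSets n k)
    (hsize : (1 / (2 * n)) * ((stableSets n k).card : ℝ) ≤ (F.card : ℝ))
    (γ : ℝ) (hγ0 : 0 < γ)
    (hpop : ∀ j ∈ Finset.Icc 1 n, ((F.filter (fun A => j ∈ A)).card : ℝ) ≤ γ * F.card) :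
    (3 / 8) * (3 / 4 - γ)
      ≤ 2 * (((F.powersetCard 2).filter
            (fun e => ∀ A ∈ e, ∀ B ∈ e, A ≠ B → Disjoint A B)).card : ℝ)
          / ((F.card : ℝ) ^ 2) := by
  rcases le_or_gt (3 / 4) γ with hγ | hγ
  · exact (mul_nonpos_of_nonneg_of_nonpos (by norm_num) (by linarith)).trans (by positivity)
  have hF' : F ⊆ (Icc 1 n).powersetCard k := hF.trans (filter_subset _ _)
  have hS : ∀ B ∈ F, B ⊆ Icc 1 n := fun B hB => (mem_powersetCard.mp (hF' hB)).1
  have hne : ∀ B ∈ F, B.Nonempty := fun B hB =>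
    card_pos.mp ((mem_powersetCard.mp (hF' hB)).2 ▸ by omega)
  have hcard := (four_mul_sq_mul_choose_le hk hn).trans hsize
  have hf : (0 : ℝ) < #F := lt_of_lt_of_le (by
    have := Nat.choose_pos (show k - 2 ≤ n by grind [Nat.le_self_pow (by norm_num : 4 ≠ 0) k])
    positivity) hcard
  have hcodeg : ∀ j ∈ Icc 1 n, ∀ j' ∈ Icc 1 n, j ≠ j' → codegree F j j' ≤ n.choose (k - 2) :=
    fun j _ j' _ hjj => by simpa using codegree_le_choose hF' hjj
  have hquad := sq_sum_degree_sq_le hF' hpop hcodeg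
  have hQ := le_mul_sq_of_sq_le_mul_add (f := #F) hγ0.le hγ.le (sum_nonneg fun j _ => sq_nonneg _)
    (by linear_combination hquad + mul_le_mul_of_nonneg_right hcard (pow_nonneg hf.le 3) / 4)
  have hcount : ((#F : ℕ) : ℝ) ^ 2 ≤
      2 * (#{e ∈ F.powersetCard 2 | ∀ A ∈ e, ∀ B ∈ e, A ≠ B → Disjoint A B} : ℕ) +
        ∑ j ∈ Icc 1 n, (degree F j : ℝ) ^ 2 := by
    exact_mod_cast card_sq_le_two_mul_card_disjoint_pairs_add hS hne
  rw [le_div_iff₀ (by positivity)]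
  nlinarith [mul_nonneg (by linarith : (0 : ℝ) ≤ 3 / 4 - γ) (sq_nonneg (#F : ℝ))]

theorem stmt_10 (n k : ℕ) (hk : 2 ≤ k) (hn : 10 * k ^ 4 ≤ n) (F : Finset (Finset ℕ))
    (hF : F ⊆ stableSets n k)
    (hsize : (1 / (2 * n)) * ((stableSets n k).card : ℝ) ≤ (F.card : ℝ))
    (γ : ℝ) (hγ0 : 0 < γ) (hγ1 : γ ≤ 1)
    (hpop : ∀ j ∈ Finset.Icc 1 n, ((F.filter (fun A => j ∈ A)).card : ℝ) ≤ γ * F.card) :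
    (3 / 8) * (3 / 4 - γ)
      ≤ 2 * (((F.powersetCard 2).filter
            (fun e => ∀ A ∈ e, ∀ B ∈ e, A ≠ B → Disjoint A B)).card : ℝ)
          / ((F.card : ℝ) ^ 2) :=
  stmt_10_general n k hk hn F hF hsize γ hγ0 hpop
end
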